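/- arXiv:0809.1308 — 3 statements merged into one kernel-verified Lean document; each statement's English description precedes it below -/
import Mathlib

section
/- Let S be a real n×m matrix. The following are equivalent: (1) every square submatrix of S (given by injective row and column selections) has signed determinant (is sign nonsingular or sign singular); (2) every cycle of the SR graph G(S) is an o-cycle, i.e., for all r ≥ 2 and all injective a : Fin r → Fin n and b : Fin r → Fin m with S (a j) (b j) ≠ 0 and S (a j) (b (j+1)) ≠ 0 for all j (indices mod r), one has (-1)^r · ∏_j sign(S (a j) (b j)) · sign(S (a j) (b (j+1))) = -1. -/
/-!
Write `det B = ∑ σ, sign σ * ∏ i, B i (σ i)`. If `σ` and `τ` both give nonzero terms, every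
nontrivial cycle of `σ⁻¹ * τ` traces a cycle of `G(S)` through the rows `i` and the columns
`σ i`, `τ i`, and the o-cycle condition says exactly that it does not change the sign of the
term. So all nonzero terms of a square submatrix have the same sign, and its determinant is
either identically zero or of constant sign on the sign class.

Conversely, an e-cycle on rows `a` and columns `b` gives matrices in the sign class of
`S.submatrix a b` with entries `t` on the diagonal, `1` on the rotated diagonal and `ε`
elsewhere. At `ε = 0` the only surviving terms are the two of the cycle, and the determinant is
`±(t ^ r - 1)`; so for small `ε > 0` it has opposite signs at `t = 2` and `t = 1 / 2`. A sign
class is convex, so by the intermediate value theorem it also contains a singular matrix.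
-/

namespace SRGraph

variable {n m : ℕ}

/-- A cycle of the SR graph `G(S)`: `r ≥ 2` together with injective maps
`a : Fin r → Fin n` (S-vertices) and `b : Fin r → Fin m` (R-vertices) such that the
entries `S (a j) (b j)` and `S (a j) (b (j+1))` (indices mod `r`) are all nonzero. -/
def IsCyc (S : Matrix (Fin n) (Fin m) ℝ) {r : ℕ} (a : Fin r → Fin n) (b : Fin r → Fin m) :
    Prop :=
  2 ≤ r ∧ Function.Injective a ∧ Function.Injective b ∧
    (∀ j, S (a j) (b j) ≠ 0) ∧ (∀ j, S (a j) (b (finRotate r j)) ≠ 0)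

/-- The parity `P(C) = (-1)^r ∏_j sign(S (a j) (b j)) · sign(S (a j) (b (j+1)))` of a
cycle; the cycle is an e-cycle if this is `1` and an o-cycle if it is `-1`. -/
noncomputable def parity (S : Matrix (Fin n) (Fin m) ℝ) {r : ℕ}
    (a : Fin r → Fin n) (b : Fin r → Fin m) : ℝ :=
  (-1 : ℝ) ^ r *
    ∏ j : Fin r, Real.sign (S (a j) (b j)) * Real.sign (S (a j) (b (finRotate r j)))

/-- A cycle is an s-cycle when the products of the absolute values of the entries on the
two halves of its disconnecting partition agree. -/
def IsSCyc (S : Matrix (Fin n) (Fin m) ℝ) {r : ℕ} (a : Fin r → Fin n)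
    (b : Fin r → Fin m) : Prop :=
  ∏ j : Fin r, |S (a j) (b j)| = ∏ j : Fin r, |S (a j) (b (finRotate r j))|

/-- The edge set of a cycle: the `2r` pairs `(a j, b j)` and `(a j, b (j+1))`. -/
def cycEdges {r : ℕ} (a : Fin r → Fin n) (b : Fin r → Fin m) : Set (Fin n × Fin m) :=
  {e | ∃ j : Fin r, e = (a j, b j) ∨ e = (a j, b (finRotate r j))}

/-- The vertex set of a cycle inside `Fin n ⊕ Fin m`. -/
def cycVerts {r : ℕ} (a : Fin r → Fin n) (b : Fin r → Fin m) : Set (Fin n ⊕ Fin m) :=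
  Set.range (Sum.inl ∘ a) ∪ Set.range (Sum.inr ∘ b)

/-- Adjacency relation on `Fin n ⊕ Fin m` determined by a set `E` of (S,R) edges. -/
def adjOf (E : Set (Fin n × Fin m)) : (Fin n ⊕ Fin m) → (Fin n ⊕ Fin m) → Prop
  | Sum.inl i, Sum.inr j => (i, j) ∈ E
  | Sum.inr j, Sum.inl i => (i, j) ∈ E
  | _, _ => False

/-- The connected component of `v` in the subgraph with vertex set `V` and edge set `E`. -/
def componentOf (E : Set (Fin n × Fin m)) (V : Set (Fin n ⊕ Fin m))
    (v : Fin n ⊕ Fin m) : Set (Fin n ⊕ Fin m) :=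
  {x ∈ V | Relation.ReflTransGen (adjOf E) v x}

/-- Vertex set of an S-to-R path `u 0 – w 0 – u 1 – ⋯ – u p – w p`. -/
def pathVerts {p : ℕ} (u : Fin (p + 1) → Fin n) (w : Fin (p + 1) → Fin m) :
    Set (Fin n ⊕ Fin m) :=
  Set.range (Sum.inl ∘ u) ∪ Set.range (Sum.inr ∘ w)

/-- Edge set (the `2p+1` pairs `(u i, w i)` and `(u (i+1), w i)`) of an S-to-R path. -/
def pathEdges {p : ℕ} (u : Fin (p + 1) → Fin n) (w : Fin (p + 1) → Fin m) :
    Set (Fin n × Fin m) :=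
  {e | ∃ i : Fin (p + 1), e = (u i, w i)} ∪ {e | ∃ i : Fin p, e = (u i.succ, w i.castSucc)}

/-- The subgraph with (nonempty) vertex set `V` and edge set `E` has all of its connected
components equal to paths joining an S-vertex to an R-vertex. -/
def SRIntersection (V : Set (Fin n ⊕ Fin m)) (E : Set (Fin n × Fin m)) : Prop :=
  V.Nonempty ∧
    ∀ v ∈ V, ∃ (p : ℕ) (u : Fin (p + 1) → Fin n) (w : Fin (p + 1) → Fin m),
      Function.Injective u ∧ Function.Injective w ∧
      pathVerts u w = componentOf E V v ∧
      pathEdges u w = {e ∈ E | Sum.inl e.1 ∈ componentOf E V v}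

/-- `G(S)` contains two e-cycles, with distinct edge sets, having S-to-R intersection. -/
def TwoECyclesWithSRIntersection (S : Matrix (Fin n) (Fin m) ℝ) : Prop :=
  ∃ (r₁ : ℕ) (a₁ : Fin r₁ → Fin n) (b₁ : Fin r₁ → Fin m)
    (r₂ : ℕ) (a₂ : Fin r₂ → Fin n) (b₂ : Fin r₂ → Fin m),
    IsCyc S a₁ b₁ ∧ parity S a₁ b₁ = 1 ∧ IsCyc S a₂ b₂ ∧ parity S a₂ b₂ = 1 ∧
    cycEdges a₁ b₁ ≠ cycEdges a₂ b₂ ∧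
    SRIntersection (cycVerts a₁ b₁ ∩ cycVerts a₂ b₂) (cycEdges a₁ b₁ ∩ cycEdges a₂ b₂)

/-- Condition (*): all e-cycles are s-cycles, and no two e-cycles (with distinct edge
sets) have S-to-R intersection. -/
def ConditionStar (S : Matrix (Fin n) (Fin m) ℝ) : Prop :=
  (∀ (r : ℕ) (a : Fin r → Fin n) (b : Fin r → Fin m),
      IsCyc S a b → parity S a b = 1 → IsSCyc S a b) ∧
  ¬ TwoECyclesWithSRIntersection S

/-- Two real matrices have the same sign pattern. -/
def SameSignPattern {k l : ℕ} (B M : Matrix (Fin k) (Fin l) ℝ) : Prop :=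
  ∀ i j, Real.sign (B i j) = Real.sign (M i j)

/-- A square real matrix is sign nonsingular if every matrix with the same sign pattern
has nonzero determinant. -/
def SignNonsingular {k : ℕ} (M : Matrix (Fin k) (Fin k) ℝ) : Prop :=
  ∀ B : Matrix (Fin k) (Fin k) ℝ, SameSignPattern B M → B.det ≠ 0

/-- A square real matrix is sign singular if every matrix with the same sign pattern has
zero determinant. -/
def SignSingular {k : ℕ} (M : Matrix (Fin k) (Fin k) ℝ) : Prop :=
  ∀ B : Matrix (Fin k) (Fin k) ℝ, SameSignPattern B M → B.det = 0

/-- `S` is strongly sign determined: every square submatrix of `S` is sign nonsingular or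
has determinant zero. -/
def SSD (S : Matrix (Fin n) (Fin m) ℝ) : Prop :=
  ∀ (k : ℕ) (ρ : Fin k → Fin n) (c : Fin k → Fin m),
    Function.Injective ρ → Function.Injective c →
    SignNonsingular (S.submatrix ρ c) ∨ (S.submatrix ρ c).det = 0

end SRGraph

namespace Real

theorem sign_mul_abs (x : ℝ) : sign x * |x| = x := by
  rcases lt_trichotomy x 0 with h | rfl | h
  · rw [sign_of_neg h, abs_of_neg h]; ring
  · simp
  · rw [sign_of_pos h, abs_of_pos h]; ring

theorem sign_mul_self_of_ne_zero {x : ℝ} (hx : x ≠ 0) : sign x * sign x = 1 := by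
  rcases sign_apply_eq_of_ne_zero x hx with h | h <;> simp [h]

theorem sign_mul_of_pos {c : ℝ} (hc : 0 < c) (x : ℝ) : sign (c * x) = sign x := by
  rcases lt_trichotomy x 0 with h | rfl | h
  · rw [sign_of_neg h, sign_of_neg (mul_neg_of_pos_of_neg hc h)]
  · simp
  · rw [sign_of_pos h, sign_of_pos (mul_pos hc h)]

theorem sign_sign (x : ℝ) : sign (sign x) = sign x := by
  rcases sign_apply_eq x with h | h | h <;> simp [h, sign_one, sign_zero, sign_neg]

theorem sign_convex_comb {x y s : ℝ} (hs₀ : 0 ≤ s) (hs₁ : s ≤ 1) (h : sign x = sign y) :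
    sign ((1 - s) * x + s * y) = sign x := by
  have hs : 0 ≤ 1 - s := sub_nonneg.mpr hs₁
  rcases lt_trichotomy x 0 with hx | hx | hx <;> rcases lt_trichotomy y 0 with hy | hy | hy <;>
    simp only [sign_of_neg, sign_of_pos, sign_zero, hx, hy] at h ⊢ <;> norm_num at h
  · exact sign_of_neg (by simpa using convex_Iio (0 : ℝ) hx hy hs hs₀ (by ring))
  · simp
  · exact sign_of_pos (by simpa using convex_Ioi (0 : ℝ) hx hy hs hs₀ (by ring))

end Real

open Equiv Finset

theorem finRotate_apply_ne_self {q : ℕ} (hq : 2 ≤ q) (j : Fin q) : finRotate q j ≠ j :=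
  Perm.mem_support.mp (support_finRotate_of_le hq ▸ mem_univ j)

theorem val_finRotate {r : ℕ} (j : Fin r) : (finRotate r j : ℕ) = (j + 1) % r := by
  obtain ⟨r, rfl⟩ : ∃ r', r = r' + 1 := ⟨r - 1, by have := j.pos; omega⟩
  simp [Fin.val_add]

namespace Equiv.Perm

variable {α : Type*}

theorem Disjoint.mul_apply_eq_or {σ τ : Perm α} (h : Disjoint σ τ) (i : α) :
    (σ * τ) i = σ i ∧ τ i = i ∨ (σ * τ) i = τ i ∧ σ i = i := by
  rcases h i with hσ | hτ
  · exact Or.inr ⟨by rw [h.commute.eq, mul_apply, hσ], hσ⟩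
  · exact Or.inl ⟨by rw [mul_apply, hτ], hτ⟩

theorem Disjoint.prod_mul_apply {β : Type*} [Fintype α] [CommMonoid β] {σ τ : Perm α}
    (h : Disjoint σ τ) (g : α → α → β) (hg : ∀ i, g i i = 1) :
    ∏ i, g i ((σ * τ) i) = (∏ i, g i (σ i)) * ∏ i, g i (τ i) := by
  rw [← prod_mul_distrib]
  refine prod_congr rfl fun i _ => ?_
  rcases h.mul_apply_eq_or i with ⟨he, hτ⟩ | ⟨he, hσ⟩
  · rw [he, hτ, hg, mul_one]
  · rw [he, hσ, hg, one_mul]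

theorem IsCycle.exists_semiconj_finRotate [Fintype α] [DecidableEq α] {δ : Perm α}
    (hδ : IsCycle δ) : ∃ (r : ℕ) (f : Fin r → α), #δ.support = r ∧ Function.Injective f ∧
      univ.image f = δ.support ∧ Function.Semiconj f (finRotate r) δ := by
  obtain ⟨x, hx, -⟩ := id hδ
  have hl : (toList δ x).formPerm = δ := by rw [formPerm_toList, hδ.cycleOf_eq hx]
  have hlen : (toList δ x).length = #δ.support := by rw [length_toList, hδ.cycleOf_eq hx]
  have hnodup := nodup_toList δ x
  have hmem : ∀ y ∈ toList δ x, y ∈ δ.support := fun y hy =>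
    (mem_toList_iff.mp hy).1.mem_support_iff.mp (mem_support.mpr hx)
  generalize toList δ x = l at hl hlen hnodup hmem
  have hinj : Function.Injective fun j : Fin l.length => l[j] := fun i j hij =>
    Fin.ext (hnodup.getElem_inj_iff.mp hij)
  refine ⟨l.length, fun j => l[j], hlen.symm, hinj, ?_, ?_⟩
  · refine eq_of_subset_of_card_le (fun y hy => ?_) ?_
    · obtain ⟨j, -, rfl⟩ := mem_image.mp hy
      exact hmem _ (List.getElem_mem _)
    · rw [card_image_of_injective _ hinj, card_univ, Fintype.card_fin, hlen]
  · intro j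
    have := List.formPerm_apply_getElem l hnodup j j.isLt
    rw [hl] at this
    simp only [Fin.getElem_fin, this, val_finRotate]

end Equiv.Perm

namespace SRGraph

open Function Filter Topology

variable {n m : ℕ}

def AllOCycles (S : Matrix (Fin n) (Fin m) ℝ) : Prop :=
  ∀ (r : ℕ) (a : Fin r → Fin n) (b : Fin r → Fin m), IsCyc S a b → parity S a b = -1

def HasSignedDet {k : ℕ} (M : Matrix (Fin k) (Fin k) ℝ) : Prop :=
  SignNonsingular M ∨ SignSingular M

theorem IsCyc.of_submatrix {S : Matrix (Fin n) (Fin m) ℝ} {k l r : ℕ} {ρ : Fin k → Fin n}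
    {c : Fin l → Fin m} (hρ : Injective ρ) (hc : Injective c) {a : Fin r → Fin k}
    {b : Fin r → Fin l} (h : IsCyc (S.submatrix ρ c) a b) : IsCyc S (ρ ∘ a) (c ∘ b) :=
  ⟨h.1, hρ.comp h.2.1, hc.comp h.2.2.1, h.2.2.2.1, h.2.2.2.2⟩

theorem AllOCycles.submatrix {S : Matrix (Fin n) (Fin m) ℝ} (h : AllOCycles S) {k l : ℕ}
    {ρ : Fin k → Fin n} {c : Fin l → Fin m} (hρ : Injective ρ) (hc : Injective c) :
    AllOCycles (S.submatrix ρ c) :=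
  fun _ _ _ hab => h _ _ _ (hab.of_submatrix hρ hc)

theorem SameSignPattern.ne_zero {k l : ℕ} {B M : Matrix (Fin k) (Fin l) ℝ}
    (hB : SameSignPattern B M) {i : Fin k} {j : Fin l} (h : M i j ≠ 0) : B i j ≠ 0 := by
  rw [Ne, ← Real.sign_eq_zero_iff, hB i j, Real.sign_eq_zero_iff]
  exact h

theorem SameSignPattern.convex_comb {k l : ℕ} {B₁ B₂ M : Matrix (Fin k) (Fin l) ℝ}
    (h₁ : SameSignPattern B₁ M) (h₂ : SameSignPattern B₂ M) {s : ℝ} (hs₀ : 0 ≤ s)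
    (hs₁ : s ≤ 1) : SameSignPattern ((1 - s) • B₁ + s • B₂) M := fun i j => by
  simp only [Matrix.add_apply, Matrix.smul_apply, smul_eq_mul]
  rw [Real.sign_convex_comb hs₀ hs₁ ((h₁ i j).trans (h₂ i j).symm), h₁]

theorem det_eq_sum_sign_mul_prod {k : ℕ} (B : Matrix (Fin k) (Fin k) ℝ) :
    B.det = ∑ σ : Perm (Fin k), ((Perm.sign σ : ℤ) : ℝ) * ∏ i, B i (σ i) := by
  rw [← Matrix.det_transpose, Matrix.det_apply]
  simp only [Matrix.transpose_apply, Units.smul_def, zsmul_eq_mul]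

section Square

variable {k : ℕ} {M : Matrix (Fin k) (Fin k) ℝ}

theorem AllOCycles.sign_mul_prod_of_isCycle (hM : AllOCycles M) (hdiag : ∀ i, M i i ≠ 0)
    {δ : Perm (Fin k)} (hδ : δ.IsCycle) (hne : ∀ i, M i (δ i) ≠ 0) :
    ((Perm.sign δ : ℤ) : ℝ) * ∏ i, Real.sign (M i i) * Real.sign (M i (δ i)) = 1 := by
  obtain ⟨r, f, hr, hf, himage, hrot⟩ := hδ.exists_semiconj_finRotate
  have hcyc : IsCyc M f f :=
    ⟨hr ▸ hδ.two_le_card_support, hf, hf, fun _ => hdiag _, fun j => (hrot j).symm ▸ hne _⟩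
  have hprod : ∏ i, Real.sign (M i i) * Real.sign (M i (δ i)) =
      ∏ j, Real.sign (M (f j) (f j)) * Real.sign (M (f j) (δ (f j))) := by
    rw [← prod_subset (subset_univ δ.support), ← himage, prod_image hf.injOn]
    intro i _ hi
    rw [Perm.notMem_support.mp hi, Real.sign_mul_self_of_ne_zero (hdiag i)]
  have hpar := hM r f f hcyc
  simp only [parity, hrot _] at hpar
  rw [hδ.sign, hr, hprod]
  push_cast
  linear_combination -hpar

theorem AllOCycles.sign_mul_prod (hM : AllOCycles M) (hdiag : ∀ i, M i i ≠ 0)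
    (δ : Perm (Fin k)) (hne : ∀ i, M i (δ i) ≠ 0) :
    ((Perm.sign δ : ℤ) : ℝ) * ∏ i, Real.sign (M i i) * Real.sign (M i (δ i)) = 1 := by
  induction δ using Perm.cycle_induction_on with
  | base_one => simp [Real.sign_mul_self_of_ne_zero (hdiag _)]
  | base_cycles δ hδ => exact hM.sign_mul_prod_of_isCycle hdiag hδ hne
  | induction_disjoint σ τ hστ _ hσ hτ =>
    have hσne : ∀ i, M i (σ i) ≠ 0 := fun i => by
      rcases hστ.mul_apply_eq_or i with ⟨he, -⟩ | ⟨-, hfix⟩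
      · exact he ▸ hne i
      · rw [hfix]; exact hdiag i
    have hτne : ∀ i, M i (τ i) ≠ 0 := fun i => by
      rcases hστ.mul_apply_eq_or i with ⟨-, hfix⟩ | ⟨he, -⟩
      · rw [hfix]; exact hdiag i
      · exact he ▸ hne i
    rw [hστ.prod_mul_apply (fun i j => Real.sign (M i i) * Real.sign (M i j))
      (fun i => Real.sign_mul_self_of_ne_zero (hdiag i)), map_mul]
    push_cast
    linear_combination (((Perm.sign τ : ℤ) : ℝ) *
      ∏ i, Real.sign (M i i) * Real.sign (M i (τ i))) * hσ hσne + hτ hτne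

noncomputable def signedTerm (M : Matrix (Fin k) (Fin k) ℝ) (σ : Perm (Fin k)) : ℝ :=
  ((Perm.sign σ : ℤ) : ℝ) * ∏ i, Real.sign (M i (σ i))

theorem signedTerm_ne_zero {σ : Perm (Fin k)} (hσ : ∀ i, M i (σ i) ≠ 0) :
    signedTerm M σ ≠ 0 :=
  mul_ne_zero (Int.cast_ne_zero.mpr (Units.ne_zero _))
    (prod_ne_zero_iff.mpr fun i _ => Real.sign_eq_zero_iff.not.mpr (hσ i))

-- Reindexing the columns by `σ` makes `σ` the diagonal, and `σ⁻¹ * τ` the permutation compared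
-- with it.
theorem AllOCycles.signedTerm_eq (hM : AllOCycles M) {σ τ : Perm (Fin k)}
    (hσ : ∀ i, M i (σ i) ≠ 0) (hτ : ∀ i, M i (τ i) ≠ 0) : signedTerm M τ = signedTerm M σ := by
  have h := (hM.submatrix injective_id σ.injective).sign_mul_prod hσ (σ⁻¹ * τ)
    (by simpa using hτ)
  simp only [Matrix.submatrix_apply, id, Perm.mul_apply, Perm.coe_inv, Equiv.apply_symm_apply,
    prod_mul_distrib] at h
  have hsq : (∏ i, Real.sign (M i (σ i))) * ∏ i, Real.sign (M i (σ i)) = 1 := by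
    rw [← prod_mul_distrib]
    exact prod_eq_one fun i _ => Real.sign_mul_self_of_ne_zero (hσ i)
  have hsign : Perm.sign τ = Perm.sign σ * Perm.sign (σ⁻¹ * τ) := by
    rw [← map_mul, mul_inv_cancel_left]
  simp only [signedTerm, hsign, Units.val_mul, Int.cast_mul]
  linear_combination (-((Perm.sign σ : ℤ) : ℝ) * ((Perm.sign (σ⁻¹ * τ) : ℤ) : ℝ) *
    ∏ i, Real.sign (M i (τ i))) * hsq + (((Perm.sign σ : ℤ) : ℝ) *
    ∏ i, Real.sign (M i (σ i))) * h

theorem SameSignPattern.prod_abs_eq_zero {B : Matrix (Fin k) (Fin k) ℝ}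
    (hB : SameSignPattern B M) {σ : Perm (Fin k)} {i : Fin k} (hi : M i (σ i) = 0) :
    ∏ j, |B j (σ j)| = 0 :=
  prod_eq_zero (mem_univ i) (by rw [abs_eq_zero, ← Real.sign_eq_zero_iff, hB, hi, Real.sign_zero])

theorem SameSignPattern.det_eq_sum {B : Matrix (Fin k) (Fin k) ℝ} (hB : SameSignPattern B M) :
    B.det = ∑ σ, signedTerm M σ * ∏ i, |B i (σ i)| := by
  rw [det_eq_sum_sign_mul_prod]
  refine sum_congr rfl fun σ _ => ?_
  simp only [signedTerm, mul_assoc, ← prod_mul_distrib, ← hB _ (σ _), Real.sign_mul_abs]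

theorem AllOCycles.hasSignedDet (hM : AllOCycles M) : HasSignedDet M := by
  by_cases h : ∃ σ₀ : Perm (Fin k), ∀ i, M i (σ₀ i) ≠ 0
  · obtain ⟨σ₀, hσ₀⟩ := h
    refine Or.inl fun B hB => ?_
    have hterm : ∀ σ, signedTerm M σ * ∏ i, |B i (σ i)| =
        signedTerm M σ₀ * ∏ i, |B i (σ i)| := by
      intro σ
      by_cases hσ : ∀ i, M i (σ i) ≠ 0
      · rw [hM.signedTerm_eq hσ₀ hσ]
      · push Not at hσ
        obtain ⟨i, hi⟩ := hσ
        rw [hB.prod_abs_eq_zero hi, mul_zero, mul_zero]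
    rw [hB.det_eq_sum, sum_congr rfl fun σ _ => hterm σ, ← mul_sum]
    exact mul_ne_zero (signedTerm_ne_zero hσ₀) (sum_pos' (fun σ _ => by positivity)
      ⟨σ₀, mem_univ _, prod_pos fun i _ => abs_pos.mpr (hB.ne_zero (hσ₀ i))⟩).ne'
  · push Not at h
    refine Or.inr fun B hB => ?_
    rw [hB.det_eq_sum]
    refine sum_eq_zero fun σ _ => ?_
    obtain ⟨i, hi⟩ := h σ
    rw [hB.prod_abs_eq_zero hi, mul_zero]

end Square

theorem HasSignedDet.det_mul_det_nonneg {k : ℕ} {M B₁ B₂ : Matrix (Fin k) (Fin k) ℝ}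
    (h : HasSignedDet M) (h₁ : SameSignPattern B₁ M) (h₂ : SameSignPattern B₂ M) :
    0 ≤ B₁.det * B₂.det := by
  by_contra! hneg
  rcases h with hsns | hss
  · have hf : Continuous fun s : ℝ => ((1 - s) • B₁ + s • B₂).det := by fun_prop
    have h0 : (0 : ℝ) ∈ Set.uIcc ((1 - 0 : ℝ) • B₁ + (0 : ℝ) • B₂).det
        ((1 - 1 : ℝ) • B₁ + (1 : ℝ) • B₂).det := by
      simp only [sub_zero, sub_self, one_smul, zero_smul, add_zero, zero_add, Set.mem_uIcc]
      rcases mul_neg_iff.mp hneg with h | h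
      · exact Or.inr ⟨h.2.le, h.1.le⟩
      · exact Or.inl ⟨h.1.le, h.2.le⟩
    obtain ⟨s, hs, hdet⟩ := intermediate_value_uIcc hf.continuousOn h0
    rw [Set.uIcc_of_le zero_le_one] at hs
    exact hsns _ (h₁.convex_comb h₂ hs.1 hs.2) hdet
  · rw [hss B₁ h₁, zero_mul] at hneg
    exact hneg.false

section CycleTestMatrix

variable {q : ℕ}

noncomputable def cycleTestMatrix (M : Matrix (Fin q) (Fin q) ℝ) (ε t : ℝ) :
    Matrix (Fin q) (Fin q) ℝ :=
  Matrix.of fun i j =>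
    (if j = i then t else if j = finRotate q i then 1 else ε) * Real.sign (M i j)

theorem sameSignPattern_cycleTestMatrix (M : Matrix (Fin q) (Fin q) ℝ) {ε t : ℝ} (hε : 0 < ε)
    (ht : 0 < t) : SameSignPattern (cycleTestMatrix M ε t) M := fun i j => by
  simp only [cycleTestMatrix, Matrix.of_apply]
  split_ifs <;> rw [Real.sign_mul_of_pos (by linarith), Real.sign_sign]

theorem continuous_det_cycleTestMatrix (M : Matrix (Fin q) (Fin q) ℝ) (t : ℝ) :
    Continuous fun ε => (cycleTestMatrix M ε t).det :=
  Continuous.matrix_det <| continuous_matrix fun i j => by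
    simp only [cycleTestMatrix, Matrix.of_apply]
    split_ifs <;> fun_prop

theorem perm_eq_one_or_finRotate (hq : 2 ≤ q) {π : Perm (Fin q)}
    (h : ∀ j, π j = j ∨ π j = finRotate q j) : π = 1 ∨ π = finRotate q := by
  by_cases hfix : ∀ j, π j = j
  · exact Or.inl (Equiv.ext hfix)
  push Not at hfix
  obtain ⟨j₀, hj₀⟩ := hfix
  have hrot := finRotate_apply_ne_self hq
  have hstep : ∀ j, π j = finRotate q j → π (finRotate q j) = finRotate q (finRotate q j) :=
    fun j hj => (h _).resolve_left fun hfix => hrot j (π.injective (hfix.trans hj.symm))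
  have hpow : ∀ i : ℕ, π ((finRotate q ^ i) j₀) = finRotate q ((finRotate q ^ i) j₀) := by
    intro i
    induction i with
    | zero => exact (h j₀).resolve_left hj₀
    | succ i ih => rw [pow_succ', Perm.mul_apply]; exact hstep _ ih
  refine Or.inr (Equiv.ext fun j => ?_)
  obtain ⟨i, rfl⟩ := (isCycle_finRotate_of_le hq).exists_pow_eq (hrot j₀) (hrot j)
  exact hpow i

theorem det_cycleTestMatrix_zero (hq : 2 ≤ q) (M : Matrix (Fin q) (Fin q) ℝ) (t : ℝ) :
    (cycleTestMatrix M 0 t).det = t ^ q * ∏ j, Real.sign (M j j) +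
      ((Perm.sign (finRotate q) : ℤ) : ℝ) * ∏ j, Real.sign (M j (finRotate q j)) := by
  have hrot := finRotate_apply_ne_self hq
  have hne : (1 : Perm (Fin q)) ≠ finRotate q := fun h => hrot ⟨0, by omega⟩ (by rw [← h]; rfl)
  rw [det_eq_sum_sign_mul_prod, Fintype.sum_eq_add 1 (finRotate q) hne]
  · simp only [cycleTestMatrix, Matrix.of_apply, Perm.coe_one, id, if_true, hrot, if_false,
      Perm.sign_one, Units.val_one, Int.cast_one, one_mul, prod_mul_distrib, prod_const, card_univ,
      Fintype.card_fin]
  · rintro π ⟨h1, hrotπ⟩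
    obtain ⟨j, hj, hj'⟩ : ∃ j, π j ≠ j ∧ π j ≠ finRotate q j := by
      by_contra! hπ
      exact (perm_eq_one_or_finRotate hq fun j => (em _).imp_right (hπ j)).elim h1 hrotπ
    rw [prod_eq_zero (mem_univ j)
      (by simp only [cycleTestMatrix, Matrix.of_apply, hj, hj', if_false, zero_mul]), mul_zero]

end CycleTestMatrix

theorem parity_mul_self {S : Matrix (Fin n) (Fin m) ℝ} {r : ℕ} {a : Fin r → Fin n}
    {b : Fin r → Fin m} (h : IsCyc S a b) : parity S a b * parity S a b = 1 := by
  unfold parity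
  rw [mul_mul_mul_comm, ← pow_add, ← two_mul, pow_mul, neg_one_sq, one_pow, one_mul,
    ← prod_mul_distrib]
  refine prod_eq_one fun j _ => ?_
  rw [mul_mul_mul_comm, Real.sign_mul_self_of_ne_zero (h.2.2.2.1 j),
    Real.sign_mul_self_of_ne_zero (h.2.2.2.2 j), one_mul]

theorem IsCyc.exists_det_mul_det_neg {S : Matrix (Fin n) (Fin m) ℝ} {r : ℕ}
    {a : Fin r → Fin n} {b : Fin r → Fin m} (h : IsCyc S a b) (hP : parity S a b = 1) :
    ∃ B₁ B₂ : Matrix (Fin r) (Fin r) ℝ, SameSignPattern B₁ (S.submatrix a b) ∧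
      SameSignPattern B₂ (S.submatrix a b) ∧ B₁.det * B₂.det < 0 := by
  set M := S.submatrix a b
  set A := ∏ j, Real.sign (M j j)
  have hA : A * A = 1 := by
    rw [← prod_mul_distrib]
    exact prod_eq_one fun j _ => Real.sign_mul_self_of_ne_zero (h.2.2.2.1 j)
  obtain ⟨r, rfl⟩ : ∃ r', r = r' + 1 := ⟨r - 1, by have := h.1; omega⟩
  have hdet : ∀ t, A * (cycleTestMatrix M 0 t).det = t ^ (r + 1) - 1 := by
    intro t
    simp only [parity, prod_mul_distrib] at hP
    change (-1) ^ (r + 1) * (A * ∏ j, Real.sign (M j (finRotate (r + 1) j))) = 1 at hP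
    rw [det_cycleTestMatrix_zero h.1, sign_finRotate]
    push_cast
    linear_combination t ^ (r + 1) * hA - hP
  have hcont : ∀ t, Continuous fun ε => A * (cycleTestMatrix M ε t).det := fun t =>
    continuous_const.mul (continuous_det_cycleTestMatrix M t)
  have h₂ : (1 : ℝ) < 2 ^ (r + 1) := one_lt_pow₀ (by norm_num) r.succ_ne_zero
  have h₁₂ : (1 / 2 : ℝ) ^ (r + 1) < 1 := pow_lt_one₀ (by norm_num) (by norm_num) r.succ_ne_zero
  have hpos : ∀ᶠ ε in 𝓝 0, 0 < A * (cycleTestMatrix M ε 2).det :=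
    continuous_const.continuousAt.eventually_lt (hcont 2).continuousAt
      (by rw [hdet]; linarith)
  have hneg : ∀ᶠ ε in 𝓝 0, A * (cycleTestMatrix M ε (1 / 2)).det < 0 :=
    (hcont _).continuousAt.eventually_lt continuous_const.continuousAt
      (by rw [hdet]; linarith)
  obtain ⟨ε, ⟨hε₂, hε₁₂⟩, hε⟩ :=
    ((hpos.and hneg).filter_mono nhdsWithin_le_nhds |>.and self_mem_nhdsWithin).exists
      (f := 𝓝[>] (0 : ℝ))
  refine ⟨_, _, sameSignPattern_cycleTestMatrix M hε two_pos,
    sameSignPattern_cycleTestMatrix M hε one_half_pos, ?_⟩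
  nlinarith

theorem allOCycles_of_forall_hasSignedDet {S : Matrix (Fin n) (Fin m) ℝ}
    (h : ∀ (k : ℕ) (ρ : Fin k → Fin n) (c : Fin k → Fin m),
      Injective ρ → Injective c → HasSignedDet (S.submatrix ρ c)) :
    AllOCycles S := by
  intro r a b hab
  refine (mul_self_eq_one_iff.mp (parity_mul_self hab)).resolve_left fun hP => ?_
  obtain ⟨B₁, B₂, h₁, h₂, hneg⟩ := hab.exists_det_mul_det_neg hP
  exact ((h r a b hab.2.1 hab.2.2.1).det_mul_det_nonneg h₁ h₂).not_gt hneg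

end SRGraph

open SRGraph in
/-- For a real `n×m` matrix `S`, the following are equivalent: (1) every square submatrix
of `S` (given by injective row and column selections) has signed determinant (is sign
nonsingular or sign singular); (2) every cycle of the SR graph `G(S)` is an o-cycle. -/
theorem signedDet_iff_all_o_cycles {n m : ℕ} (S : Matrix (Fin n) (Fin m) ℝ) :
    (∀ (k : ℕ) (ρ : Fin k → Fin n) (c : Fin k → Fin m),
      Function.Injective ρ → Function.Injective c →
      SignNonsingular (S.submatrix ρ c) ∨ SignSingular (S.submatrix ρ c)) ↔
    (∀ (r : ℕ) (a : Fin r → Fin n) (b : Fin r → Fin m),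
      IsCyc S a b → parity S a b = -1) :=
  ⟨allOCycles_of_forall_hasSignedDet, fun h _ _ _ hρ hc =>
    (AllOCycles.submatrix h hρ hc).hasSignedDet⟩
end

section
/- Let A be an n×n real matrix such that T_σ = sgn(σ) · ∏_i A i (σ i) is nonzero for at least one permutation σ of Fin n, and all nonzero terms have the same sign: there exists ε ∈ {−1, 1} such that ε · T_σ > 0 for every permutation σ with T_σ ≠ 0. Then A is sign nonsingular: every real matrix B with the same sign pattern as A (sign(B i j) = sign(A i j) for all i, j) has nonzero determinant. -/
/-- Two real matrices of the same size have the same sign pattern if the signs of their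
corresponding entries agree. -/
def SameSignPattern {k l : ℕ} (B M : Matrix (Fin k) (Fin l) ℝ) : Prop :=
  ∀ i j, Real.sign (B i j) = Real.sign (M i j)

lemma real_sign_mul (a b : ℝ) : Real.sign (a * b) = Real.sign a * Real.sign b := by
  rcases lt_trichotomy a 0 with ha | rfl | ha
  · rcases lt_trichotomy b 0 with hb | rfl | hb
    · rw [Real.sign_of_neg ha, Real.sign_of_neg hb,
        Real.sign_of_pos (mul_pos_of_neg_of_neg ha hb)]; norm_num
    · simp
    · rw [Real.sign_of_neg ha, Real.sign_of_pos hb,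
        Real.sign_of_neg (mul_neg_of_neg_of_pos ha hb)]; norm_num
  · simp
  · rcases lt_trichotomy b 0 with hb | rfl | hb
    · rw [Real.sign_of_pos ha, Real.sign_of_neg hb,
        Real.sign_of_neg (mul_neg_of_pos_of_neg ha hb)]; norm_num
    · simp
    · rw [Real.sign_of_pos ha, Real.sign_of_pos hb,
        Real.sign_of_pos (mul_pos ha hb)]; norm_num

lemma real_sign_prod {ι : Type*} (s : Finset ι) (f : ι → ℝ) :
    Real.sign (∏ i ∈ s, f i) = ∏ i ∈ s, Real.sign (f i) := by
  classical
  induction s using Finset.cons_induction with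
  | empty => simp
  | cons a s ha ih => rw [Finset.prod_cons, real_sign_mul, ih, Finset.prod_cons]

lemma pos_of_sign_eq {c x y : ℝ} (hc : c = -1 ∨ c = 1)
    (h : Real.sign x = Real.sign y) (hy : 0 < c * y) : 0 < c * x := by
  rcases hc with rfl | rfl
  · have hy' : y < 0 := by linarith
    rw [Real.sign_of_neg hy'] at h
    have hx : x < 0 := by
      rcases lt_trichotomy x 0 with h' | h' | h'
      · exact h'
      · exact absurd h (by simp [h'])
      · rw [Real.sign_of_pos h'] at h; linarith
    linarith
  · have hy' : 0 < y := by linarith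
    rw [Real.sign_of_pos hy'] at h
    have hx : 0 < x := by
      rcases lt_trichotomy x 0 with h' | h' | h'
      · rw [Real.sign_of_neg h'] at h; linarith
      · exact absurd h (by simp [h'])
      · exact h'
    linarith

/-- If some determinant term `T_σ = sgn(σ)·∏ A i (σ i)` of an `n×n` real matrix `A` is
nonzero, and all nonzero terms have the same sign (there is `ε ∈ {−1, 1}` with
`ε · T_σ > 0` whenever `T_σ ≠ 0`), then `A` is sign nonsingular: every real matrix `B`
with the same sign pattern as `A` has nonzero determinant. -/
theorem sign_nonsingular_of_terms_same_sign {n : ℕ} (A : Matrix (Fin n) (Fin n) ℝ)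
    (h1 : ∃ σ : Equiv.Perm (Fin n),
      ((Equiv.Perm.sign σ : ℤ) : ℝ) * ∏ i, A i (σ i) ≠ 0)
    (ε : ℝ) (hε : ε = -1 ∨ ε = 1)
    (h2 : ∀ σ : Equiv.Perm (Fin n),
      ((Equiv.Perm.sign σ : ℤ) : ℝ) * ∏ i, A i (σ i) ≠ 0 →
      0 < ε * (((Equiv.Perm.sign σ : ℤ) : ℝ) * ∏ i, A i (σ i))) :
    ∀ B : Matrix (Fin n) (Fin n) ℝ, SameSignPattern B A → B.det ≠ 0 := by
  intro B hB
  -- the term of B and A for each σ have the same sign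
  have hterm : ∀ σ : Equiv.Perm (Fin n),
      Real.sign (((Equiv.Perm.sign σ : ℤ) : ℝ) * ∏ i, B i (σ i)) =
      Real.sign (((Equiv.Perm.sign σ : ℤ) : ℝ) * ∏ i, A i (σ i)) := by
    intro σ
    rw [real_sign_mul, real_sign_mul, real_sign_prod, real_sign_prod]
    congr 1
    exact Finset.prod_congr rfl fun i _ => hB i (σ i)
  have key : ∀ σ : Equiv.Perm (Fin n),
      0 ≤ ε * (((Equiv.Perm.sign σ : ℤ) : ℝ) * ∏ i, B i (σ i)) := by
    intro σ
    by_cases hA : ((Equiv.Perm.sign σ : ℤ) : ℝ) * ∏ i, A i (σ i) = 0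
    · -- then the B term is zero too
      have : Real.sign (((Equiv.Perm.sign σ : ℤ) : ℝ) * ∏ i, B i (σ i)) = 0 := by
        rw [hterm σ, hA, Real.sign_zero]
      rw [Real.sign_eq_zero_iff.mp this, mul_zero]
    · exact le_of_lt (pos_of_sign_eq hε (hterm σ) (h2 σ hA))
  obtain ⟨σ₀, hσ₀⟩ := h1
  have keypos : 0 < ε * (((Equiv.Perm.sign σ₀ : ℤ) : ℝ) * ∏ i, B i (σ₀ i)) :=
    pos_of_sign_eq hε (hterm σ₀) (h2 σ₀ hσ₀)
  have hdet : B.det = ∑ σ : Equiv.Perm (Fin n),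
      ((Equiv.Perm.sign σ : ℤ) : ℝ) * ∏ i, B i (σ i) := by
    rw [← Matrix.det_transpose, Matrix.det_apply']
    simp [Matrix.transpose_apply]
  have : 0 < ε * B.det := by
    rw [hdet, Finset.mul_sum]
    exact Finset.sum_pos' (fun σ _ => key σ) ⟨σ₀, Finset.mem_univ σ₀, keypos⟩
  intro h
  rw [h, mul_zero] at this
  exact lt_irrefl 0 this
end

section
/- Let S be the 6×3 real matrix with rows (1,1,1), (1,1,1), (1,1,0), (−1,0,0), (0,−1,0), (0,0,−1). Then S is SSD: every square submatrix of S (given by injective row and column selections) is either sign nonsingular or has determinant zero; yet the SR graph G(S) contains two e-cycles with distinct edge sets having S-to-R intersection. Hence Condition (*) is not a necessary condition for a matrix to be SSD. -/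
open SRGraph

/-- The stoichiometric matrix of the reaction system
`D ⇌ A + B + C`, `E ⇌ A + B + C`, `F ⇌ A + B`. -/
noncomputable def Scounter : Matrix (Fin 6) (Fin 3) ℝ :=
  !![1, 1, 1;
     1, 1, 1;
     1, 1, 0;
     -1, 0, 0;
     0, -1, 0;
     0, 0, -1]

/-! `Scounter` is the real image of an integer matrix, so being SSD becomes a finite check. A
square matrix whose Leibniz terms all have one sign, not all zero, is sign nonsingular, since
that property depends only on the sign pattern; the kernel verifies that every minor of the
integer matrix (at most `3 × 3`) either has this property or vanishes.

The two e-cycles are the 2-cycles `A – R₁ – B – R₃` and `A – R₁ – C – R₂` (species are rows,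
reactions are columns), both running through positive entries. They meet in the single edge
`(A, R₁)`, a path from an S-vertex to an R-vertex. -/

open Equiv

namespace Matrix

variable {k : ℕ} {R S : Type*}

def detTerm [CommRing R] (M : Matrix (Fin k) (Fin k) R) (σ : Perm (Fin k)) : R :=
  ((Perm.sign σ : ℤ) : R) * ∏ i, M (σ i) i

theorem det_eq_sum_detTerm [CommRing R] (M : Matrix (Fin k) (Fin k) R) :
    M.det = ∑ σ, detTerm M σ :=
  det_apply' M

theorem detTerm_map [CommRing R] [CommRing S] (f : R →+* S) (M : Matrix (Fin k) (Fin k) R)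
    (σ : Perm (Fin k)) : detTerm (f.mapMatrix M) σ = f (detTerm M σ) := by
  simp [detTerm, map_prod]

def DetTermsUnisigned [CommRing R] [LinearOrder R] (M : Matrix (Fin k) (Fin k) R) : Prop :=
  (∃ σ, detTerm M σ ≠ 0) ∧ ((∀ σ, 0 ≤ detTerm M σ) ∨ ∀ σ, detTerm M σ ≤ 0)

instance [CommRing R] [LinearOrder R] (M : Matrix (Fin k) (Fin k) R) :
    Decidable (DetTermsUnisigned M) := by
  unfold DetTermsUnisigned; infer_instance

namespace DetTermsUnisigned

variable [CommRing R] [LinearOrder R] {M : Matrix (Fin k) (Fin k) R}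

theorem det_ne_zero [IsStrictOrderedRing R] (h : DetTermsUnisigned M) : M.det ≠ 0 := by
  obtain ⟨⟨σ, hσ⟩, hnonneg | hnonpos⟩ := h <;> rw [det_eq_sum_detTerm]
  · exact (Finset.sum_pos' (fun τ _ => hnonneg τ)
      ⟨σ, Finset.mem_univ _, (hnonneg σ).lt_of_ne' hσ⟩).ne'
  · exact (Finset.sum_neg' (fun τ _ => hnonpos τ)
      ⟨σ, Finset.mem_univ _, (hnonpos σ).lt_of_ne hσ⟩).ne

theorem of_sign_eq [CommRing S] [LinearOrder S]
    {B : Matrix (Fin k) (Fin k) S} (h : DetTermsUnisigned M)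
    (hsign : ∀ σ, SignType.sign (detTerm B σ) = SignType.sign (detTerm M σ)) :
    DetTermsUnisigned B := by
  obtain ⟨⟨σ, hσ⟩, hM⟩ := h
  refine ⟨⟨σ, ?_⟩, hM.imp (fun h τ => ?_) (fun h τ => ?_)⟩
  · rw [Ne, ← sign_eq_zero_iff, hsign, sign_eq_zero_iff]
    exact hσ
  · rw [← sign_nonneg_iff, hsign, sign_nonneg_iff]
    exact h τ
  · rw [← sign_nonpos_iff, hsign, sign_nonpos_iff]
    exact h τ

theorem map_intCast [IsStrictOrderedRing R] {N : Matrix (Fin k) (Fin k) ℤ}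
    (h : DetTermsUnisigned N) :
    DetTermsUnisigned (N.map ((↑) : ℤ → R)) := by
  have hterm (σ) : detTerm (N.map ((↑) : ℤ → R)) σ = detTerm N σ :=
    detTerm_map (Int.castRingHom R) N σ
  obtain ⟨⟨σ, hσ⟩, hN⟩ := h
  refine ⟨⟨σ, ?_⟩, hN.imp (fun h τ => ?_) (fun h τ => ?_)⟩ <;> rw [hterm]
  · exact_mod_cast hσ
  · exact_mod_cast h τ
  · exact_mod_cast h τ

end DetTermsUnisigned

end Matrix

theorem Real.signType_sign_eq_of_sign_eq {x y : ℝ} (h : Real.sign x = Real.sign y) :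
    SignType.sign x = SignType.sign y := by
  rcases lt_trichotomy x 0 with hx | rfl | hx <;> rcases lt_trichotomy y 0 with hy | rfl | hy <;>
    simp_all [Real.sign_of_neg, Real.sign_of_pos, sign_pos]
  all_goals norm_num at h

namespace SRGraph

variable {n m : ℕ}

theorem SameSignPattern.sign_detTerm_eq {k : ℕ} {B M : Matrix (Fin k) (Fin k) ℝ}
    (h : SameSignPattern B M) (σ : Perm (Fin k)) :
    SignType.sign (B.detTerm σ) = SignType.sign (M.detTerm σ) := by
  have sign_prod (A : Matrix (Fin k) (Fin k) ℝ) :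
      SignType.sign (∏ i, A (σ i) i) = ∏ i, SignType.sign (A (σ i) i) :=
    map_prod signHom _ _
  rw [Matrix.detTerm, Matrix.detTerm, sign_mul, sign_mul, sign_prod, sign_prod]
  exact congrArg _ (Finset.prod_congr rfl fun i _ => Real.signType_sign_eq_of_sign_eq (h _ _))

theorem signNonsingular_of_detTermsUnisigned {k : ℕ} {M : Matrix (Fin k) (Fin k) ℝ}
    (hM : M.DetTermsUnisigned) : SignNonsingular M := fun _ hB =>
  (hM.of_sign_eq hB.sign_detTerm_eq).det_ne_zero

theorem ssd_map_intCast (N : Matrix (Fin n) (Fin m) ℤ)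
    (h : ∀ (k : ℕ) (ρ : Fin k → Fin n) (c : Fin k → Fin m),
      Function.Injective ρ → Function.Injective c →
      (N.submatrix ρ c).DetTermsUnisigned ∨ (N.submatrix ρ c).det = 0) :
    SSD (N.map ((↑) : ℤ → ℝ)) := by
  intro k ρ c hρ hc
  rcases h k ρ c hρ hc with hN | hN
  · exact Or.inl (signNonsingular_of_detTermsUnisigned hN.map_intCast)
  · right
    rw [Matrix.submatrix_map]
    simpa [hN] using ((Int.castRingHom ℝ).map_det (N.submatrix ρ c)).symm

theorem isCyc_of_pos {S : Matrix (Fin n) (Fin m) ℝ} {r : ℕ} {a : Fin r → Fin n}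
    {b : Fin r → Fin m} (hr : 2 ≤ r) (ha : Function.Injective a) (hb : Function.Injective b)
    (h₁ : ∀ j, 0 < S (a j) (b j)) (h₂ : ∀ j, 0 < S (a j) (b (finRotate r j))) :
    IsCyc S a b :=
  ⟨hr, ha, hb, fun j => (h₁ j).ne', fun j => (h₂ j).ne'⟩

theorem parity_of_pos {S : Matrix (Fin n) (Fin m) ℝ} {r : ℕ} {a : Fin r → Fin n}
    {b : Fin r → Fin m} (h₁ : ∀ j, 0 < S (a j) (b j))
    (h₂ : ∀ j, 0 < S (a j) (b (finRotate r j))) :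
    parity S a b = (-1) ^ r := by
  simp only [parity, Real.sign_of_pos (h₁ _), Real.sign_of_pos (h₂ _), mul_one,
    Finset.prod_const_one]

theorem isCyc_and_parity_eq_one_of_pos {S : Matrix (Fin n) (Fin m) ℝ} {a : Fin 2 → Fin n}
    {b : Fin 2 → Fin m} (ha : Function.Injective a) (hb : Function.Injective b)
    (h₁ : ∀ j, 0 < S (a j) (b j)) (h₂ : ∀ j, 0 < S (a j) (b (finRotate 2 j))) :
    IsCyc S a b ∧ parity S a b = 1 :=
  ⟨isCyc_of_pos le_rfl ha hb h₁ h₂, by rw [parity_of_pos h₁ h₂]; norm_num⟩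

theorem componentOf_edge (i : Fin n) (j : Fin m) {v : Fin n ⊕ Fin m}
    (hv : v ∈ ({Sum.inl i, Sum.inr j} : Set (Fin n ⊕ Fin m))) :
    componentOf {(i, j)} {Sum.inl i, Sum.inr j} v = {Sum.inl i, Sum.inr j} := by
  refine Set.Subset.antisymm (Set.sep_subset _ _) fun x hx => ⟨hx, ?_⟩
  have hij : adjOf {(i, j)} (Sum.inl i) (Sum.inr j) := rfl
  have hji : adjOf {(i, j)} (Sum.inr j) (Sum.inl i) := rfl
  rcases hv with rfl | rfl <;> rcases hx with rfl | rfl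
  · exact .refl
  · exact .single hij
  · exact .single hji
  · exact .refl

theorem srIntersection_edge (i : Fin n) (j : Fin m) :
    SRIntersection {Sum.inl i, Sum.inr j} {(i, j)} := by
  refine ⟨Set.insert_nonempty _ _, fun v hv => ⟨0, ![i], ![j],
    Function.injective_of_subsingleton (α := Fin 1) _,
    Function.injective_of_subsingleton (α := Fin 1) _, ?_, ?_⟩⟩ <;>
    rw [componentOf_edge i j hv]
  · ext x
    simp [pathVerts, eq_comm]
  · ext e
    simp +contextual [pathEdges]

end SRGraph

def ScounterInt : Matrix (Fin 6) (Fin 3) ℤ :=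
  !![1, 1, 1;
     1, 1, 1;
     1, 1, 0;
     -1, 0, 0;
     0, -1, 0;
     0, 0, -1]

theorem Scounter_eq_map : Scounter = ScounterInt.map ((↑) : ℤ → ℝ) := by
  ext i j
  fin_cases i <;> fin_cases j <;> norm_num [Scounter, ScounterInt]

theorem ScounterInt_minors (k : ℕ) (ρ : Fin k → Fin 6) (c : Fin k → Fin 3)
    (hρ : Function.Injective ρ) (hc : Function.Injective c) :
    (ScounterInt.submatrix ρ c).DetTermsUnisigned ∨ (ScounterInt.submatrix ρ c).det = 0 := by
  have hk : k ≤ 3 := by simpa using Fintype.card_le_of_injective c hc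
  interval_cases k <;> revert ρ c <;> decide +kernel

theorem Scounter_ssd : SSD Scounter :=
  Scounter_eq_map ▸ ssd_map_intCast ScounterInt ScounterInt_minors

theorem Scounter_pos {i : Fin 6} {j : Fin 3} (h : 0 < ScounterInt i j) : 0 < Scounter i j := by
  rw [Scounter_eq_map, Matrix.map_apply]
  exact_mod_cast h

def cycleRows₁ : Fin 2 → Fin 6 := ![0, 1]
def cycleCols₁ : Fin 2 → Fin 3 := ![0, 2]
def cycleRows₂ : Fin 2 → Fin 6 := ![0, 2]
def cycleCols₂ : Fin 2 → Fin 3 := ![0, 1]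

theorem eCycle₁ :
    IsCyc Scounter cycleRows₁ cycleCols₁ ∧ parity Scounter cycleRows₁ cycleCols₁ = 1 :=
  isCyc_and_parity_eq_one_of_pos (by decide) (by decide)
    (fun j => Scounter_pos (by revert j; decide)) (fun j => Scounter_pos (by revert j; decide))

theorem eCycle₂ :
    IsCyc Scounter cycleRows₂ cycleCols₂ ∧ parity Scounter cycleRows₂ cycleCols₂ = 1 :=
  isCyc_and_parity_eq_one_of_pos (by decide) (by decide)
    (fun j => Scounter_pos (by revert j; decide)) (fun j => Scounter_pos (by revert j; decide))

theorem cycVerts_inter :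
    cycVerts cycleRows₁ cycleCols₁ ∩ cycVerts cycleRows₂ cycleCols₂ =
      {Sum.inl 0, Sum.inr 0} := by
  ext x
  simp only [cycVerts, Set.mem_inter_iff, Set.mem_union, Set.mem_range, Function.comp_apply,
    Set.mem_insert_iff, Set.mem_singleton_iff]
  revert x
  decide

theorem cycEdges_inter :
    cycEdges cycleRows₁ cycleCols₁ ∩ cycEdges cycleRows₂ cycleCols₂ = {(0, 0)} := by
  ext e
  simp only [cycEdges, Set.mem_inter_iff, Set.mem_ofPred_eq, Set.mem_singleton_iff]
  revert e
  decide

theorem cycEdges_ne : cycEdges cycleRows₁ cycleCols₁ ≠ cycEdges cycleRows₂ cycleCols₂ := by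
  intro h
  have h₁ : ((0 : Fin 6), (2 : Fin 3)) ∈ cycEdges cycleRows₁ cycleCols₁ := ⟨0, .inr rfl⟩
  rw [h] at h₁
  revert h₁
  simp only [cycEdges, Set.mem_ofPred_eq]
  decide

theorem Scounter_twoECycles : TwoECyclesWithSRIntersection Scounter :=
  ⟨2, cycleRows₁, cycleCols₁, 2, cycleRows₂, cycleCols₂, eCycle₁.1, eCycle₁.2, eCycle₂.1,
    eCycle₂.2, cycEdges_ne, cycVerts_inter ▸ cycEdges_inter ▸ srIntersection_edge 0 0⟩

/-- The matrix `Scounter` is SSD — every square submatrix is sign nonsingular or has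
determinant zero — yet its SR graph contains two e-cycles with distinct edge sets having
S-to-R intersection; hence Condition (*) is not necessary for a matrix to be SSD. -/
theorem SSD_but_not_conditionStar :
    SSD Scounter ∧ TwoECyclesWithSRIntersection Scounter ∧ ¬ ConditionStar Scounter :=
  ⟨Scounter_ssd, Scounter_twoECycles, fun h => h.2 Scounter_twoECycles⟩
end
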